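/- For the scalar map g(a) = φ(wλa) with φ odd, C³, φ'(0) = α > 0, φ'''(0) = γ < 0, λ > 0: if wλα > 1 and wλα − 1 is sufficiently small, then there exists a* > 0 with g(a*) = a*, and |g'(a*)| < 1, so ±a* are locally attracting fixed points, while a = 0 is a repelling fixed point (|g'(0)| = wλα > 1). -/

import Mathlib

/-!
Since `φ` is odd, `φ(0) = φ''(0) = 0`, so by Taylor's theorem `φ(x) ≈ αx + γx³/6` and
`φ'(x) ≈ α + γx²/2` near `0`; continuity of `φ'''` makes this quantitative with cubic upper and
lower bounds on `[0, r]`. With `c = wλ` and `d = cα - 1 > 0` small, `cφ(x) - x ≈ x (d + cγx²/6)`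
changes sign at `x ≍ √d`, giving a fixed point `x*` with `c|γ|x*²` comparable to `d`. There
`cφ'(x*) ≈ 1 + d + cγx*²/2 ≈ 1 - 2d`, which lies in `(-1, 1)`. Oddness transfers everything
to `-x*`, and `cφ'(0) = cα > 1`.
-/

open Set

theorem Function.Odd.iteratedDeriv_neg {𝕜 F : Type*} [NontriviallyNormedField 𝕜]
    [NormedAddCommGroup F] [NormedSpace 𝕜 F] {f : 𝕜 → F} (hf : f.Odd) (n : ℕ) (a : 𝕜) :
    iteratedDeriv n f (-a) = -((-1 : 𝕜) ^ n • iteratedDeriv n f a) := by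
  have h := iteratedDeriv_comp_neg n f a
  rw [funext hf, iteratedDeriv_fun_neg] at h
  calc iteratedDeriv n f (-a) = ((-1 : 𝕜) ^ n * (-1) ^ n) • iteratedDeriv n f (-a) := by
        rw [← mul_pow, neg_one_mul, neg_neg, one_pow, one_smul]
    _ = -((-1 : 𝕜) ^ n • iteratedDeriv n f a) := by rw [mul_smul, ← h, smul_neg]

theorem exists_taylor_lagrange_iteratedDeriv {f : ℝ → ℝ} {n : ℕ} (hf : ContDiff ℝ (n + 1) f)
    (x₀ x : ℝ) :
    ∃ ξ ∈ uIcc x₀ x, f x = ∑ k ∈ Finset.range (n + 1),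
      ((k.factorial : ℝ)⁻¹ * (x - x₀) ^ k) * iteratedDeriv k f x₀ +
      iteratedDeriv (n + 1) f ξ * (x - x₀) ^ (n + 1) / (n + 1).factorial := by
  rcases eq_or_ne x₀ x with rfl | hx
  · refine ⟨x₀, left_mem_uIcc, ?_⟩
    have h := taylor_within_apply f n univ x₀ x₀
    simp only [taylorWithinEval_self, iteratedDerivWithin_univ, smul_eq_mul] at h
    simpa using h
  obtain ⟨ξ, hξ, h⟩ := taylor_mean_remainder_lagrange_iteratedDeriv hx hf.contDiffOn
  refine ⟨ξ, uIoo_subset_uIcc_self hξ, ?_⟩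
  have hpoly : taylorWithinEval f n (uIcc x₀ x) x₀ x = ∑ k ∈ Finset.range (n + 1),
      ((k.factorial : ℝ)⁻¹ * (x - x₀) ^ k) * iteratedDeriv k f x₀ := by
    refine (taylor_within_apply _ _ _ _ _).trans (Finset.sum_congr rfl fun k hk => ?_)
    rw [smul_eq_mul, iteratedDerivWithin_eq_iteratedDeriv (uniqueDiffOn_uIcc hx)
      (hf.contDiffAt.of_le (by exact_mod_cast (Finset.mem_range.1 hk).le)) left_mem_uIcc]
  rw [← hpoly, ← h]
  ring

theorem Function.Odd.deriv_neg {f : ℝ → ℝ} (hf : f.Odd) (a : ℝ) : deriv f (-a) = deriv f a := by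
  simpa using hf.iteratedDeriv_neg 1 a

/-- The derivative bounds are the value bounds differentiated. The ratio `2` between the two
cubic coefficients is below `3`, which is what makes the fixed point found below attracting. -/
def CubicPinch (φ φ' : ℝ → ℝ) (α b r : ℝ) : Prop :=
  ∀ x ∈ Icc 0 r, α * x - 2 * b * x ^ 3 ≤ φ x ∧ φ x ≤ α * x - b * x ^ 3 ∧
    α - 6 * b * x ^ 2 ≤ φ' x ∧ φ' x ≤ α - 3 * b * x ^ 2

theorem Function.Odd.exists_cubicPinch {φ : ℝ → ℝ} (hodd : φ.Odd) (hφ : ContDiff ℝ 3 φ)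
    (hγ : iteratedDeriv 3 φ 0 < 0) :
    ∃ r > 0, CubicPinch φ (deriv φ) (deriv φ 0) (-iteratedDeriv 3 φ 0 / 9) r := by
  set γ := iteratedDeriv 3 φ 0
  -- `φ'''` stays in `[4γ/3, 2γ/3] = [-12b, -6b]` near `0`, with `b = -γ/9`
  obtain ⟨ε, hε, hnear⟩ : ∃ ε > 0, ∀ ⦃s⦄, dist s 0 < ε →
      iteratedDeriv 3 φ s ∈ Icc (4 * γ / 3) (2 * γ / 3) :=
    Metric.eventually_nhds_iff.1 <|
      (hφ.continuous_iteratedDeriv 3 le_rfl).continuousAt.eventually_mem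
        (Icc_mem_nhds (by linarith) (by linarith))
  have hthird : ∀ x ∈ Icc 0 (ε / 2), ∀ ξ ∈ uIcc 0 x,
      iteratedDeriv 3 φ ξ ∈ Icc (4 * γ / 3) (2 * γ / 3) := by
    intro x hx ξ hξ
    rw [uIcc_of_le hx.1] at hξ
    exact hnear (by rw [Real.dist_eq, sub_zero, abs_of_nonneg hξ.1]; linarith [hξ.2, hx.2])
  have hsecond : iteratedDeriv 2 φ 0 = 0 := by
    have h := hodd.iteratedDeriv_neg 2 0
    rw [neg_zero] at h
    norm_num at h
    linarith
  refine ⟨ε / 2, by positivity, fun x hx => ?_⟩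
  obtain ⟨ξ, hξ, hφx⟩ := exists_taylor_lagrange_iteratedDeriv (n := 2) hφ 0 x
  obtain ⟨η, hη, hφ'x⟩ := exists_taylor_lagrange_iteratedDeriv (n := 1) hφ.deriv' 0 x
  simp only [Finset.sum_range_succ, Finset.sum_range_zero, ← iteratedDeriv_succ',
    iteratedDeriv_zero, iteratedDeriv_one, hodd.map_zero, hsecond] at hφx hφ'x
  have hξ3 := hthird x hx ξ hξ
  have hη3 := hthird x hx η hη
  have hx2 : 0 ≤ x ^ 2 := by positivity
  have hx3 : 0 ≤ x ^ 3 := pow_nonneg hx.1 3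
  norm_num [Nat.factorial] at hφx hφ'x
  refine ⟨?_, ?_, ?_, ?_⟩ <;>
  nlinarith [mul_nonneg hx3 (sub_nonneg.2 hξ3.1), mul_nonneg hx3 (sub_nonneg.2 hξ3.2),
    mul_nonneg hx2 (sub_nonneg.2 hη3.1), mul_nonneg hx2 (sub_nonneg.2 hη3.2)]

namespace CubicPinch

variable {φ φ' : ℝ → ℝ} {α b r c : ℝ}

theorem exists_fixedPoint (hpinch : CubicPinch φ φ' α b r) (hφ : ContinuousOn φ (Icc 0 r))
    (hb : 0 < b) (hr : 0 < r) (hc : 0 < c) (hcα : 1 < c * α)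
    (hcr : 2 * (c * α - 1) ≤ b * c * r ^ 2) :
    ∃ x ∈ Ioc 0 r, c * φ x = x := by
  set d := c * α - 1
  have hd : 0 < d := by linarith
  set xlo := √(d / (4 * b * c))
  set xhi := √(2 * d / (b * c))
  have hxlo : 0 < xlo := Real.sqrt_pos.2 (by positivity)
  have hxlo2 : xlo ^ 2 = d / (4 * b * c) := Real.sq_sqrt (by positivity)
  have hxhi2 : xhi ^ 2 = 2 * d / (b * c) := Real.sq_sqrt (by positivity)
  have hlohi : xlo ≤ xhi := Real.sqrt_le_sqrt <| by
    rw [div_le_div_iff₀ (by positivity) (by positivity)]; nlinarith [mul_pos hb hc]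
  have hhir : xhi ≤ r := Real.sqrt_le_iff.2 ⟨hr.le, by
    rw [div_le_iff₀ (by positivity)]; linarith⟩
  have hsub : Icc xlo xhi ⊆ Icc 0 r := Icc_subset_Icc hxlo.le hhir
  -- at `xlo` the linear growth `d x` beats the cubic loss, at `xhi` it no longer does
  have hlo : xlo ≤ c * φ xlo := by
    have h := (hpinch xlo (hsub ⟨le_rfl, hlohi⟩)).1
    have e : 2 * b * c * xlo ^ 2 = d / 2 := by rw [hxlo2]; field_simp; ring
    nlinarith [mul_le_mul_of_nonneg_left h hc.le]
  have hhi : c * φ xhi ≤ xhi := by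
    have h := (hpinch xhi (hsub ⟨hlohi, le_rfl⟩)).2.1
    have e : b * c * xhi ^ 2 = 2 * d := by rw [hxhi2]; field_simp
    nlinarith [mul_le_mul_of_nonneg_left h hc.le, hxlo.trans_le hlohi]
  obtain ⟨x, hx, hfix⟩ := intermediate_value_Icc' (f := fun x => c * φ x - x) hlohi
    ((continuousOn_const.mul (hφ.mono hsub)).sub continuousOn_id)
    (show (0 : ℝ) ∈ Icc _ _ from ⟨by linarith, by linarith⟩)
  exact ⟨x, ⟨hxlo.trans_le hx.1, (hsub hx).2⟩, sub_eq_zero.1 hfix⟩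

theorem abs_mul_lt_one_of_fixedPoint (hpinch : CubicPinch φ φ' α b r) (hc : 0 < c)
    (hcα : 1 < c * α) (hsmall : c * α - 1 < 2 / 5) {x : ℝ} (hx : x ∈ Ioc 0 r)
    (hfix : c * φ x = x) : |c * φ' x| < 1 := by
  obtain ⟨hφlo, hφhi, hφ'lo, hφ'hi⟩ := hpinch x (Ioc_subset_Icc_self hx)
  have hupper : c * b * x ^ 2 ≤ c * α - 1 := by
    have h : x * (c * b * x ^ 2) ≤ x * (c * α - 1) := by
      nlinarith [mul_le_mul_of_nonneg_left hφhi hc.le]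
    exact le_of_mul_le_mul_left h hx.1
  have hlower : c * α - 1 ≤ 2 * (c * b * x ^ 2) := by
    have h : x * (c * α - 1) ≤ x * (2 * (c * b * x ^ 2)) := by
      nlinarith [mul_le_mul_of_nonneg_left hφlo hc.le]
    exact le_of_mul_le_mul_left h hx.1
  rw [abs_lt]
  constructor <;>
  nlinarith [mul_le_mul_of_nonneg_left hφ'lo hc.le, mul_le_mul_of_nonneg_left hφ'hi hc.le]

theorem exists_attracting_fixedPoint (hpinch : CubicPinch φ φ' α b r)
    (hφ : ContinuousOn φ (Icc 0 r)) (hα : 0 < α) (hb : 0 < b) (hr : 0 < r) :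
    ∃ δ > 0, ∀ c, 1 < c * α → c * α - 1 < δ → ∃ x > 0, c * φ x = x ∧ |c * φ' x| < 1 := by
  refine ⟨min (b * r ^ 2 / (2 * α)) (2 / 5), by positivity, fun c hcα hδ => ?_⟩
  have hc : 0 < c := pos_of_mul_pos_left (hcα.trans' one_pos) hα.le
  have hδr : 2 * (c * α - 1) * α ≤ b * r ^ 2 := by
    have h := (lt_min_iff.1 hδ).1
    rw [lt_div_iff₀ (by positivity)] at h
    linarith
  have hr' : 2 * (c * α - 1) ≤ b * c * r ^ 2 := by
    nlinarith [mul_pos hb (pow_pos hr 2)]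
  obtain ⟨x, hx, hfix⟩ := hpinch.exists_fixedPoint hφ hb hr hc hcα hr'
  exact ⟨x, hx.1, hfix,
    hpinch.abs_mul_lt_one_of_fixedPoint hc hcα (lt_min_iff.1 hδ).2 hx hfix⟩

end CubicPinch

theorem stmt_9_general (φ : ℝ → ℝ) (hodd : ∀ z, φ (-z) = -φ z)
    (hC3 : ContDiff ℝ 3 φ) (α γ : ℝ)
    (hα : deriv φ 0 = α) (hαpos : 0 < α)
    (hγ : iteratedDeriv 3 φ 0 = γ) (hγneg : γ < 0)
    (lam : ℝ) :
    ∃ δ > (0 : ℝ), ∀ w : ℝ, 0 < w → 1 < w * lam * α → w * lam * α - 1 < δ →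
      ∃ aStar > (0 : ℝ),
        φ (w * lam * aStar) = aStar ∧
        φ (w * lam * (-aStar)) = -aStar ∧
        |deriv (fun a => φ (w * lam * a)) aStar| < 1 ∧
        |deriv (fun a => φ (w * lam * a)) (-aStar)| < 1 ∧
        1 < |deriv (fun a => φ (w * lam * a)) 0| := by
  subst hα hγ
  have hodd : φ.Odd := hodd
  obtain ⟨r, hr, hpinch⟩ := hodd.exists_cubicPinch hC3 hγneg
  obtain ⟨δ, hδ, hattract⟩ := hpinch.exists_attracting_fixedPoint hC3.continuous.continuousOn
    hαpos (by linarith) hr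
  refine ⟨δ, hδ, fun w _ hcα hcδ => ?_⟩
  set c := w * lam
  have hc : 0 < c := pos_of_mul_pos_left (hcα.trans' one_pos) hαpos.le
  obtain ⟨x, hx, hfix, hderiv⟩ := hattract c hcα hcδ
  have hcx : c * (x / c) = x := mul_div_cancel₀ x hc.ne'
  have hfix' : φ (c * (x / c)) = x / c := by rw [hcx, eq_div_iff hc.ne', mul_comm, hfix]
  have hg' (a : ℝ) : deriv (fun a => φ (c * a)) a = c * deriv φ (c * a) :=
    deriv_comp_mul_left c φ a
  refine ⟨x / c, by positivity, hfix', ?_, ?_, ?_, ?_⟩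
  · rw [mul_neg, hodd.eq, hfix']
  · rwa [hg', hcx]
  · rwa [hg', mul_neg, hcx, hodd.deriv_neg]
  · rwa [hg', mul_zero, abs_of_pos (by linarith)]

/-- For the reduced scalar map `g(a) = φ(wλa)` with `φ` odd, `C³`,
`φ'(0) = α > 0`, `φ'''(0) = γ < 0` and `λ > 0`: whenever `wλα > 1` with
`wλα − 1` sufficiently small, there is a fixed point `a* > 0` with
`|g'(±a*)| < 1` (so `±a*` are locally attracting), while `0` is repelling
since `|g'(0)| = wλα > 1`. -/
theorem stmt_9 (φ : ℝ → ℝ) (hodd : ∀ z, φ (-z) = -φ z)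
    (hC3 : ContDiff ℝ 3 φ) (α γ : ℝ)
    (hα : deriv φ 0 = α) (hαpos : 0 < α)
    (hγ : iteratedDeriv 3 φ 0 = γ) (hγneg : γ < 0)
    (lam : ℝ) (hlam : 0 < lam) :
    ∃ δ > (0 : ℝ), ∀ w : ℝ, 0 < w → 1 < w * lam * α → w * lam * α - 1 < δ →
      ∃ aStar > (0 : ℝ),
        φ (w * lam * aStar) = aStar ∧
        φ (w * lam * (-aStar)) = -aStar ∧
        |deriv (fun a => φ (w * lam * a)) aStar| < 1 ∧
        |deriv (fun a => φ (w * lam * a)) (-aStar)| < 1 ∧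
        1 < |deriv (fun a => φ (w * lam * a)) 0| :=
  stmt_9_general φ hodd hC3 α γ hα hαpos hγ hγneg lam
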